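/- For ω = 0 and all γ ∈ ℝ, the spectrum of the kagome operator satisfies: (1) σ_{−γ,0} = σ_{γ,0} (reflexion with respect to the axis γ = 0); (2) e ∈ σ_{8π−γ,0} if and only if −e ∈ σ_{γ,0} (reflexion with respect to the point (4π,0)). -/

import Mathlib

/- The lattice reflection α ↦ (-α₂, -α₁), combined with the exchange of the first and third
components and the gauge factor e^{-iγα₁α₂}, is a unitary operator intertwining `Q_{γ,ω}` with
`Q_{-γ,-ω}`; conjugate operators have the same spectrum. Replacing γ by γ + 8π multiplies
e^{±i(ω+γ/8)} by -1 and leaves every other phase e^{iγk/2} (k ∈ ℤ) unchanged, so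
`Q_{γ+8π,ω} = -Q_{γ,ω}`; with γ replaced by -γ this gives `σ_{8π-γ,0} = -σ_{-γ,0} = -σ_{γ,0}`. -/

open Complex Matrix

noncomputable section

/-- `ℓ²(ℤ²;ℂ³)`. -/
abbrev KH : Type := lp (fun _ : ℤ × ℤ => EuclideanSpace ℂ (Fin 3)) 2

/-- `Q` is the kagome operator `Q_{γ,ω}`, written entrywise: the three components of
`ℂ³` correspond to the labels `1,3,5` of the kagome lattice, the magnetic translations are
`(τ₁v)_α = v_{α₁−1,α₂}`, `(τ₂v)_α = e^{iγα₁}v_{α₁,α₂−1}`, and `Q_{γ,ω}` has zero diagonal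
blocks and off-diagonal blocks `Q₁₂ = e^{i(ω+γ/8)}(τ₁* + e^{−iγ/2}τ₁*τ₂)`,
`Q₁₃ = e^{−i(ω+γ/8)}(τ₁* + τ₂*)`, `Q₂₁ = e^{−i(ω+γ/8)}(τ₁ + e^{−iγ/2}τ₁τ₂*)`,
`Q₂₃ = e^{i(ω+γ/8)}(e^{−iγ/2}τ₁τ₂* + τ₂*)`, `Q₃₁ = e^{i(ω+γ/8)}(τ₁ + τ₂)`,
`Q₃₂ = e^{−i(ω+γ/8)}(e^{−iγ/2}τ₁*τ₂ + τ₂)`. -/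
def IsKagome (γ ω : ℝ) (Q : KH →L[ℂ] KH) : Prop :=
  ∀ v : KH, ∀ a b : ℤ,
    (Q v) (a, b) 0 =
        Complex.exp (Complex.I * ((ω : ℂ) + (γ : ℂ)/8)) *
          (v (a+1, b) 1 +
            Complex.exp (Complex.I * (-((γ : ℂ)/2) + (γ : ℂ) * ((a : ℂ)+1))) * v (a+1, b-1) 1)
      + Complex.exp (-(Complex.I * ((ω : ℂ) + (γ : ℂ)/8))) *
          (v (a+1, b) 2 + Complex.exp (-(Complex.I * (γ : ℂ) * (a : ℂ))) * v (a, b+1) 2)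
    ∧
    (Q v) (a, b) 1 =
        Complex.exp (-(Complex.I * ((ω : ℂ) + (γ : ℂ)/8))) *
          (v (a-1, b) 0 +
            Complex.exp (Complex.I * (-((γ : ℂ)/2) - (γ : ℂ) * ((a : ℂ)-1))) * v (a-1, b+1) 0)
      + Complex.exp (Complex.I * ((ω : ℂ) + (γ : ℂ)/8)) *
          (Complex.exp (Complex.I * (-((γ : ℂ)/2) - (γ : ℂ) * ((a : ℂ)-1))) * v (a-1, b+1) 2 +
            Complex.exp (-(Complex.I * (γ : ℂ) * (a : ℂ))) * v (a, b+1) 2)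
    ∧
    (Q v) (a, b) 2 =
        Complex.exp (Complex.I * ((ω : ℂ) + (γ : ℂ)/8)) *
          (v (a-1, b) 0 + Complex.exp (Complex.I * (γ : ℂ) * (a : ℂ)) * v (a, b-1) 0)
      + Complex.exp (-(Complex.I * ((ω : ℂ) + (γ : ℂ)/8))) *
          (Complex.exp (Complex.I * (-((γ : ℂ)/2) + (γ : ℂ) * ((a : ℂ)+1))) * v (a+1, b-1) 1 +
            Complex.exp (Complex.I * (γ : ℂ) * (a : ℂ)) * v (a, b-1) 1)

open scoped ENNReal Real

theorem spectrum_eq_of_mul_eq_mul {R A : Type*} [CommSemiring R] [Ring A] [Algebra R A]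
    {a b : A} (u : Aˣ) (h : a * u = u * b) : spectrum R a = spectrum R b := by
  rw [(Units.eq_mul_inv_iff_mul_eq u).2 h, spectrum.units_conjugate]

theorem Memℓp.comp_equiv {ι κ : Type*} {E : ι → Type*} [∀ i, NormedAddCommGroup (E i)]
    {p : ℝ≥0∞} {f : ∀ i, E i} (hf : Memℓp f p) (e : κ ≃ ι) : Memℓp (fun k => f (e k)) p := by
  obtain rfl | rfl | hp := p.trichotomy
  · exact memℓp_zero (hf.finite_dsupport.preimage e.injective.injOn)
  · have hbdd := hf.bddAbove
    rw [← e.surjective.range_comp] at hbdd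
    exact memℓp_infty hbdd
  · exact memℓp_gen ((e.summable_iff (f := fun i => ‖f i‖ ^ p.toReal)).2 (hf.summable hp))

namespace lp

variable {ι κ : Type*} {E F : Type*} [NormedAddCommGroup E] [NormedAddCommGroup F]
  {p : ℝ≥0∞}

theorem norm_eq_of_norm_apply_eq (hp : p ≠ 0) (e : κ ≃ ι) {f : lp (fun _ : ι => E) p}
    {g : lp (fun _ : κ => F) p} (h : ∀ k, ‖g k‖ = ‖f (e k)‖) : ‖g‖ = ‖f‖ := by
  obtain rfl | rfl | hp' := p.trichotomy
  · exact absurd rfl hp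
  · simp only [norm_eq_ciSup, h]
    exact e.iSup_comp (g := fun i => ‖f i‖)
  · simp only [norm_eq_tsum_rpow hp', h]
    rw [e.tsum_eq (fun i => ‖f i‖ ^ p.toReal)]

variable {𝕜 : Type*} [NormedField 𝕜] [NormedSpace 𝕜 E] [NormedSpace 𝕜 F] [Fact (1 ≤ p)]

def reindexIsometry (e : κ ≃ ι) (L : κ → E →ₗᵢ[𝕜] F) :
    lp (fun _ : ι => E) p →ₗᵢ[𝕜] lp (fun _ : κ => F) p where
  toFun f := ⟨fun k => L k (f (e k)),
    ((lp.memℓp f).comp_equiv e).mono' fun k => (L k).norm_map _ |>.le⟩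
  map_add' _ _ := lp.ext <| funext fun k => map_add (L k) _ _
  map_smul' _ _ := lp.ext <| funext fun k => map_smul (L k) _ _
  norm_map' _ := norm_eq_of_norm_apply_eq (zero_lt_one.trans_le Fact.out).ne' e
    fun k => (L k).norm_map _

@[simp]
theorem reindexIsometry_apply (e : κ ≃ ι) (L : κ → E →ₗᵢ[𝕜] F) (f : lp (fun _ : ι => E) p)
    (k : κ) : reindexIsometry e L f k = L k (f (e k)) :=
  rfl

end lp

def latticeReflection : ℤ × ℤ ≃ ℤ × ℤ where
  toFun α := (-α.2, -α.1)
  invFun α := (-α.2, -α.1)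
  left_inv α := by simp
  right_inv α := by simp

@[simp]
theorem latticeReflection_apply (α : ℤ × ℤ) : latticeReflection α = (-α.2, -α.1) :=
  rfl

def kagomeGauge (γ : ℝ) (α : ℤ × ℤ) : ℂ :=
  exp ((-(γ * α.1 * α.2) : ℝ) * I)

theorem norm_kagomeGauge (γ : ℝ) (α : ℤ × ℤ) : ‖kagomeGauge γ α‖ = 1 :=
  norm_exp_ofReal_mul_I _

theorem kagomeGauge_neg_mul_kagomeGauge_latticeReflection (γ : ℝ) (α : ℤ × ℤ) :
    kagomeGauge (-γ) α * kagomeGauge γ (latticeReflection α) = 1 := by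
  rw [kagomeGauge, kagomeGauge, ← exp_add, ← exp_zero]
  congr 1
  push_cast [latticeReflection_apply]
  ring

def kagomeFibreMap (γ : ℝ) (α : ℤ × ℤ) :
    EuclideanSpace ℂ (Fin 3) →ₗᵢ[ℂ] EuclideanSpace ℂ (Fin 3) where
  toLinearMap := kagomeGauge γ α •
    (LinearIsometryEquiv.piLpCongrLeft 2 ℂ ℂ (Equiv.swap (0 : Fin 3) 2)).toLinearMap
  norm_map' x := by simp [norm_smul, norm_kagomeGauge]

def kagomeReflection (γ : ℝ) : KH →L[ℂ] KH :=
  (lp.reindexIsometry latticeReflection (kagomeFibreMap γ)).toContinuousLinearMap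

theorem kagomeReflection_apply (γ : ℝ) (v : KH) (α : ℤ × ℤ) (j : Fin 3) :
    kagomeReflection γ v α j = kagomeGauge γ α * v (latticeReflection α) (Equiv.swap 0 2 j) := by
  simp [kagomeReflection, kagomeFibreMap, LinearIsometryEquiv.piLpCongrLeft_apply]

theorem kagomeReflection_neg_kagomeReflection (γ : ℝ) (v : KH) :
    kagomeReflection (-γ) (kagomeReflection γ v) = v := by
  ext α j
  rw [kagomeReflection_apply, kagomeReflection_apply, ← mul_assoc,
    kagomeGauge_neg_mul_kagomeGauge_latticeReflection]
  simp

def kagomeReflectionEquiv (γ : ℝ) : KH ≃L[ℂ] KH :=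
  .equivOfInverse (kagomeReflection γ) (kagomeReflection (-γ))
    (kagomeReflection_neg_kagomeReflection γ)
    fun v => by simpa using kagomeReflection_neg_kagomeReflection (-γ) v

theorem IsKagome.kagomeReflection_comm {γ ω : ℝ} {Q Q' : KH →L[ℂ] KH} (h : IsKagome γ ω Q)
    (h' : IsKagome (-γ) (-ω) Q') :
    Q' ∘L kagomeReflection γ = kagomeReflection γ ∘L Q := by
  ext v ⟨a, b⟩ j
  fin_cases j <;>
  · simp only [Fin.zero_eta, Fin.mk_one, Fin.reduceFinMk, ContinuousLinearMap.comp_apply,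
      kagomeReflection_apply, Equiv.swap_apply_left, Equiv.swap_apply_right,
      Equiv.swap_apply_of_ne_of_ne, ne_eq, Fin.reduceEq, not_false_eq_true, h' _ a b, h v,
      latticeReflection_apply, kagomeGauge]
    push_cast
    simp only [mul_add, add_mul, ← mul_assoc, ← exp_add]
    ring_nf

theorem IsKagome.unique {γ ω : ℝ} {Q Q' : KH →L[ℂ] KH} (h : IsKagome γ ω Q)
    (h' : IsKagome γ ω Q') : Q = Q' := by
  ext v ⟨a, b⟩ j
  obtain ⟨h₀, h₁, h₂⟩ := h v a b
  obtain ⟨h₀', h₁', h₂'⟩ := h' v a b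
  fin_cases j
  exacts [h₀.trans h₀'.symm, h₁.trans h₁'.symm, h₂.trans h₂'.symm]

theorem IsKagome.neg_add_eight_pi {γ ω : ℝ} {Q : KH →L[ℂ] KH} (h : IsKagome γ ω Q) :
    IsKagome (γ + 8 * π) ω (-Q) := by
  have shift (x y : ℂ) (n : ℤ) (hxy : x = y + n * (2 * π * I)) : exp x = exp y :=
    exp_eq_exp_iff_exists_int.2 ⟨n, hxy⟩
  have e₁ : exp (I * (ω + ((γ + 8 * π : ℝ) : ℂ) / 8)) = -exp (I * (ω + γ / 8)) := by
    rw [← exp_add_pi_mul_I]; congr 1; push_cast; ring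
  have e₂ : exp (-(I * (ω + ((γ + 8 * π : ℝ) : ℂ) / 8))) = -exp (-(I * (ω + γ / 8))) := by
    rw [← exp_sub_pi_mul_I]; congr 1; push_cast; ring
  intro v a b
  have e₃ : exp (I * (-(((γ + 8 * π : ℝ) : ℂ) / 2) + ((γ + 8 * π : ℝ) : ℂ) * (a + 1))) =
      exp (I * (-((γ : ℂ) / 2) + γ * (a + 1))) :=
    shift _ _ (4 * a + 2) (by push_cast; ring)
  have e₄ : exp (I * (-(((γ + 8 * π : ℝ) : ℂ) / 2) - ((γ + 8 * π : ℝ) : ℂ) * (a - 1))) =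
      exp (I * (-((γ : ℂ) / 2) - γ * (a - 1))) :=
    shift _ _ (2 - 4 * a) (by push_cast; ring)
  have e₅ : exp (I * ((γ + 8 * π : ℝ) : ℂ) * a) = exp (I * γ * a) :=
    shift _ _ (4 * a) (by push_cast; ring)
  have e₆ : exp (-(I * ((γ + 8 * π : ℝ) : ℂ) * a)) = exp (-(I * γ * a)) :=
    shift _ _ (-4 * a) (by push_cast; ring)
  obtain ⟨h₀, h₁, h₂⟩ := h v a b
  refine ⟨?_, ?_, ?_⟩ <;>
  · simp only [_root_.neg_apply, lp.coeFn_neg, Pi.neg_apply, PiLp.neg_apply,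
      h₀, h₁, h₂, e₁, e₂, e₃, e₄, e₅, e₆]
    ring

theorem stmt12 (γ : ℝ) (Q Q₂ Q₃ : KH →L[ℂ] KH)
    (h : IsKagome γ 0 Q)
    (h₂ : IsKagome (-γ) 0 Q₂)
    (h₃ : IsKagome (8 * Real.pi - γ) 0 Q₃) :
    spectrum ℂ Q₂ = spectrum ℂ Q
    ∧ (∀ e : ℂ, e ∈ spectrum ℂ Q₃ ↔ -e ∈ spectrum ℂ Q) := by
  have hQ₂ : spectrum ℂ Q₂ = spectrum ℂ Q :=
    spectrum_eq_of_mul_eq_mul (kagomeReflectionEquiv γ).toUnit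
      (h.kagomeReflection_comm (by rwa [neg_zero]))
  have hQ₃ : Q₃ = -Q₂ := h₃.unique (by simpa [neg_add_eq_sub] using h₂.neg_add_eight_pi)
  refine ⟨hQ₂, fun e => ?_⟩
  rw [hQ₃, ← spectrum.neg_eq, Set.mem_neg, hQ₂]

end
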